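/- arXiv:0910.4794 — 2 statements merged into one kernel-verified Lean document; each statement's English description precedes it below -/
import Mathlib

section
/- In Q[[q, t]], the unique formal power series solution A(t) (with coefficients in Q[[q]]) of the functional equation A(t) = (qt/(1-qt)) * (1 + B_1) + (qt/(1-qt)^2) * A_1, where A_1 = A(1) and B_1 = (d/dt)[A(t)/t] at t = 1, satisfies A_1 = q(1-q)^3/(1 - 5q + 7q^2 - 4q^3). -/
/-!
On the subring of `ℚ[[q]][[t]]` of series whose `tᵐ`-coefficient is divisible by `qᵐ`, evaluation
at `t = 1` (summing the coefficients `q`-adically) is a ring homomorphism. Applying it to the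
functional equation and to its image under the Euler operator `t d/dt` gives two linear equations
over `ℚ[[q]]`: `(1-q)² A₁ = q(1-q)(1+B₁) + qA₁` and
`(1-q)² (B₁+A₁) - 2q(1-q) A₁ = (q-2q²)(1+B₁) + qA₁`. Eliminating `B₁` leaves
`A₁ (1 - 5q + 7q² - 4q³) = q(1-q)³`.
-/

open PowerSeries Finset

namespace PowerSeries

variable {R : Type*} [CommRing R]

/-- In degree `n` the sum over `m` is cut off at `m ≤ n`; this is the `q`-adic value `F(q, 1)`
(and is multiplicative) only on `convergentAtOne R`. -/
noncomputable def evalAtOne (F : R⟦X⟧⟦X⟧) : R⟦X⟧ :=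
  mk fun n => ∑ m ∈ range (n + 1), coeff n (coeff m F)

theorem coeff_evalAtOne (F : R⟦X⟧⟦X⟧) (n : ℕ) :
    coeff n (evalAtOne F) = ∑ m ∈ range (n + 1), coeff n (coeff m F) :=
  coeff_mk _ _

theorem evalAtOne_add (F G : R⟦X⟧⟦X⟧) : evalAtOne (F + G) = evalAtOne F + evalAtOne G := by
  ext n
  simp only [coeff_evalAtOne, map_add, sum_add_distrib]

variable (R) in
def convergentAtOne : Subring R⟦X⟧⟦X⟧ where
  carrier := {F | ∀ m, X ^ m ∣ coeff m F}
  mul_mem' {F G} hF hG m := by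
    rw [coeff_mul]
    refine dvd_sum fun p hp => ?_
    rw [← mem_antidiagonal.mp hp, pow_add]
    exact mul_dvd_mul (hF p.1) (hG p.2)
  add_mem' hF hG m := by
    rw [map_add]
    exact dvd_add (hF m) (hG m)
  one_mem' m := by
    rcases m with _ | m
    · rw [pow_zero]
      exact one_dvd _
    · rw [coeff_one, if_neg m.succ_ne_zero]
      exact dvd_zero _
  zero_mem' m := by simp
  neg_mem' hF m := by
    rw [map_neg]
    exact (hF m).neg_right

variable {F G : R⟦X⟧⟦X⟧}

theorem coeff_coeff_eq_zero_of_lt (hF : F ∈ convergentAtOne R) {m n : ℕ} (h : n < m) :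
    coeff n (coeff m F) = 0 :=
  X_pow_dvd_iff.mp (hF m) n h

theorem coeff_evalAtOne_of_lt (hF : F ∈ convergentAtOne R) {n N : ℕ} (h : n < N) :
    coeff n (evalAtOne F) = ∑ m ∈ range N, coeff n (coeff m F) := by
  rw [coeff_evalAtOne]
  refine sum_subset (range_subset_range.mpr h) fun m _ hm => ?_
  exact coeff_coeff_eq_zero_of_lt hF (by simpa using hm)

theorem evalAtOne_mul (hF : F ∈ convergentAtOne R) (hG : G ∈ convergentAtOne R) :
    evalAtOne (F * G) = evalAtOne F * evalAtOne G := by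
  ext n
  calc coeff n (evalAtOne (F * G))
      = ∑ m ∈ range (n + 1), ∑ i ∈ range (m + 1), coeff n (coeff i F * coeff (m - i) G) := by
        refine (coeff_evalAtOne _ n).trans (sum_congr rfl fun m _ => ?_)
        rw [coeff_mul, map_sum]
        exact Nat.sum_antidiagonal_eq_sum_range_succ (fun i j => coeff n (coeff i F * coeff j G)) m
    _ = ∑ i ∈ range (n + 1), ∑ j ∈ range (n + 1 - i), coeff n (coeff i F * coeff j G) :=
        sum_range_diag_flip _ fun i j => coeff n (coeff i F * coeff j G)
    _ = ∑ i ∈ range (n + 1), ∑ j ∈ range (n + 1), coeff n (coeff i F * coeff j G) := by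
        refine sum_congr rfl fun i _ => sum_subset (range_subset_range.mpr (by omega)) ?_
        intro j _ hj
        have hij : X ^ (n + 1) ∣ coeff i F * coeff j G :=
          (pow_dvd_pow (X : R⟦X⟧) (show n + 1 ≤ i + j by rw [mem_range] at hj; omega)).trans
            (by rw [pow_add]; exact mul_dvd_mul (hF i) (hG j))
        exact X_pow_dvd_iff.mp hij n (Nat.lt_succ_self n)
    _ = coeff n (evalAtOne F * evalAtOne G) := by
        symm
        rw [coeff_mul, sum_congr rfl fun p hp => by
          rw [coeff_evalAtOne_of_lt hF (Nat.antidiagonal.fst_lt hp),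
            coeff_evalAtOne_of_lt hG (Nat.antidiagonal.snd_lt hp), sum_mul_sum]]
        rw [sum_comm]
        refine sum_congr rfl fun i _ => ?_
        rw [sum_comm]
        simp only [coeff_mul]

theorem C_mem_convergentAtOne (r : R⟦X⟧) : C r ∈ convergentAtOne R := by
  rintro (_ | m)
  · rw [pow_zero]
    exact one_dvd _
  · rw [coeff_C, if_neg m.succ_ne_zero]
    exact dvd_zero _

theorem C_X_mul_X_mem_convergentAtOne : C X * X ∈ convergentAtOne R := by
  rintro (_ | _ | m)
  · simp
  · simp
  · simp [coeff_succ_mul_X]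

theorem coeff_X_mul_derivative {S : Type*} [CommSemiring S] (f : S⟦X⟧) (m : ℕ) :
    coeff m (X * d⁄dX S f) = m * coeff m f := by
  rcases m with _ | m
  · simp
  · rw [coeff_succ_X_mul, coeff_derivative, mul_comm]
    push_cast
    rfl

theorem X_mul_derivative_mem_convergentAtOne (hF : F ∈ convergentAtOne R) :
    X * d⁄dX R⟦X⟧ F ∈ convergentAtOne R := fun m => by
  rw [coeff_X_mul_derivative]
  exact (hF m).mul_left _

theorem evalAtOne_C (r : R⟦X⟧) : evalAtOne (C r) = r := by
  ext n
  rw [coeff_evalAtOne, sum_eq_single 0]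
  · rw [coeff_zero_C]
  · intro m _ hm
    rw [coeff_C, if_neg hm, map_zero]
  · simp

theorem evalAtOne_C_X_mul_X : evalAtOne (C X * X : R⟦X⟧⟦X⟧) = X := by
  ext n
  rw [coeff_evalAtOne, sum_eq_single 1]
  · simp
  · rintro (_ | _ | m) _ hm
    · simp
    · exact absurd rfl hm
    · simp [coeff_succ_mul_X]
  · intro h
    obtain rfl : n = 0 := by simpa using h
    simp

variable (R) in
noncomputable def evalAtOneHom : convergentAtOne R →+* R⟦X⟧ where
  toFun F := evalAtOne F
  map_one' := (congrArg evalAtOne (map_one C).symm).trans (evalAtOne_C 1)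
  map_mul' F G := evalAtOne_mul F.2 G.2
  map_zero' := (congrArg evalAtOne (map_zero C).symm).trans (evalAtOne_C 0)
  map_add' F G := evalAtOne_add (F : R⟦X⟧⟦X⟧) G

theorem X_mul_derivative_of_temperley {S : Type*} [CommRing S] {A : S⟦X⟧} {a c d : S}
    (h : A * (1 - C a * X) ^ 2 = C a * X * (1 - C a * X) * C c + C a * X * C d) :
    X * d⁄dX S A * (1 - C a * X) ^ 2 - 2 * (C a * X) * (1 - C a * X) * A =
      (C a * X - 2 * (C a * X) ^ 2) * C c + C a * X * C d := by
  have h' := congrArg (fun F => X * d⁄dX S F) h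
  simp only [Derivation.leibniz, Derivation.leibniz_pow, map_add, map_sub, derivative_C,
    derivative_X, Derivation.map_one_eq_zero, smul_eq_mul, nsmul_eq_mul] at h'
  linear_combination h'

theorem evalAtOne_of_temperley {A : R⟦X⟧⟦X⟧} (hA : A ∈ convergentAtOne R) {c d : R⟦X⟧}
    (h : A * (1 - C X * X) ^ 2 = C X * X * (1 - C X * X) * C c + C X * X * C d) :
    evalAtOne A * (1 - X) ^ 2 = X * (1 - X) * c + X * d ∧
      evalAtOne (X * d⁄dX R⟦X⟧ A) * (1 - X) ^ 2 - 2 * X * (1 - X) * evalAtOne A =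
        (X - 2 * X ^ 2) * c + X * d := by
  let a : convergentAtOne R := ⟨A, hA⟩
  let θa : convergentAtOne R := ⟨_, X_mul_derivative_mem_convergentAtOne hA⟩
  let qt : convergentAtOne R := ⟨C X * X, C_X_mul_X_mem_convergentAtOne⟩
  let const (r : R⟦X⟧) : convergentAtOne R := ⟨C r, C_mem_convergentAtOne r⟩
  have e₁ : a * (1 - qt) ^ 2 = qt * (1 - qt) * const c + qt * const d := Subtype.ext h
  have e₂ : θa * (1 - qt) ^ 2 - 2 * qt * (1 - qt) * a = (qt - 2 * qt ^ 2) * const c + qt * const d :=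
    Subtype.ext (X_mul_derivative_of_temperley h)
  have hqt : evalAtOneHom R qt = X := evalAtOne_C_X_mul_X
  have hconst (r : R⟦X⟧) : evalAtOneHom R (const r) = r := evalAtOne_C r
  have E₁ := congrArg (evalAtOneHom R) e₁
  have E₂ := congrArg (evalAtOneHom R) e₂
  simp only [map_mul, map_add, map_sub, map_pow, map_one, map_ofNat, hqt, hconst] at E₁ E₂
  exact ⟨E₁, E₂⟩

end PowerSeries

/-- The unique formal power series solution `A(t) ∈ ℚ[[q]][[t]]` of the `w = 0`
Temperley equation `A(t) = (qt/(1-qt))(1 + B₁) + (qt/(1-qt)²)·A₁` (stated here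
multiplied through by the unit `(1-qt)²`), where `A₁ = A(1)` and
`B₁ = d/dt[A(t)/t]|_{t=1}`, satisfies `A₁ = q(1-q)³/(1 - 5q + 7q² - 4q³)`. -/
theorem temperley_w_zero_solution
    (A : PowerSeries (PowerSeries ℚ)) (A₁ B₁ : PowerSeries ℚ)
    (horder : ∀ m n : ℕ, n < m → (coeff n) ((coeff m) A) = 0)
    (hA1 : ∀ n : ℕ, (coeff n) A₁ =
      ∑ m ∈ Finset.range (n + 1), (coeff n) ((coeff m) A))
    (hB1 : ∀ n : ℕ, (coeff n) B₁ =
      ∑ m ∈ Finset.range (n + 1), ((m : ℚ) - 1) * (coeff n) ((coeff m) A))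
    (heq : A * (1 - PowerSeries.C (X : PowerSeries ℚ) * X) ^ 2 =
      PowerSeries.C (X : PowerSeries ℚ) * X *
          (1 - PowerSeries.C (X : PowerSeries ℚ) * X) *
          PowerSeries.C (1 + B₁) +
        PowerSeries.C (X : PowerSeries ℚ) * X *
          PowerSeries.C A₁) :
    A₁ = (X : PowerSeries ℚ) * (1 - X) ^ 3 * (1 - 5 * X + 7 * X ^ 2 - 4 * X ^ 3)⁻¹ := by
  have hA : A ∈ convergentAtOne ℚ := fun m => X_pow_dvd_iff.mpr (horder m)
  have hA₁ : evalAtOne A = A₁ := by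
    ext n
    rw [coeff_evalAtOne, hA1]
  have hB₁ : evalAtOne (X * d⁄dX ℚ⟦X⟧ A) = B₁ + A₁ := by
    ext n
    rw [coeff_evalAtOne, map_add, hA1, hB1, ← sum_add_distrib]
    refine sum_congr rfl fun m _ => ?_
    rw [coeff_X_mul_derivative, ← map_natCast C m, coeff_C_mul]
    ring
  obtain ⟨E₁, E₂⟩ := evalAtOne_of_temperley hA heq
  rw [hA₁] at E₁ E₂
  rw [hB₁] at E₂
  have hD : constantCoeff (1 - 5 * X + 7 * X ^ 2 - 4 * X ^ 3 : ℚ⟦X⟧) ≠ 0 := by simp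
  rw [eq_mul_inv_iff_mul_eq hD]
  linear_combination (1 - 3 * X + 3 * X ^ 2 : ℚ⟦X⟧) * E₁ + X * (1 - X) * E₂
end

section
/- Every simplex-duplex polyomino either ends (rightmost column) with a simplex column, or its rightmost column is duplex and the column immediately to its left is a simplex column; in the latter case, removing the rightmost column's two components and recording (i) the polyomino formed by all remaining columns and (ii) the positions of the two components against the second-last column gives a bijection between simplex-duplex polyominoes ending in a duplex column whose second-last column has n cells, and triples consisting of an element of S with last column of height n, a choice of two non-adjacent cells in that last column, and an ordered pair of positive integers (the component heights). -/
/-!  Polyominoes are modelled as finite, edge-connected sets of unit cells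
(indexed by their integer coordinates).  `colP P x` is the set of
y-coordinates of cells of the column of `P` at abscissa `x`, and
`comps s` is its number of connected components (number of run-starts).
A simplex-duplex polyomino has at most two components per column and no two
adjacent duplex (two-component) columns.  For a duplex column `s`,
`lowTop s` is the top of its lower component and `upBot s` the bottom of its
upper component. -/

noncomputable def fmax (s : Finset ℤ) : ℤ := sSup (↑s : Set ℤ)
noncomputable def fmin (s : Finset ℤ) : ℤ := sInf (↑s : Set ℤ)

def cellAdj (a b : ℤ × ℤ) : Prop :=
  (a.1 = b.1 ∧ (a.2 = b.2 + 1 ∨ b.2 = a.2 + 1)) ∨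
  (a.2 = b.2 ∧ (a.1 = b.1 + 1 ∨ b.1 = a.1 + 1))

def IsPolyomino (P : Finset (ℤ × ℤ)) : Prop :=
  P.Nonempty ∧ ∀ a ∈ P, ∀ b ∈ P,
    Relation.ReflTransGen (fun u v => u ∈ P ∧ v ∈ P ∧ cellAdj u v) a b

def colP (P : Finset (ℤ × ℤ)) (x : ℤ) : Finset ℤ :=
  (P.filter (fun c => c.1 = x)).image Prod.snd

def comps (s : Finset ℤ) : ℕ := (s.filter (fun y => y - 1 ∉ s)).card

def IsColumnDuplex (P : Finset (ℤ × ℤ)) : Prop :=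
  IsPolyomino P ∧ ∀ x : ℤ, comps (colP P x) ≤ 2

def IsSimplexDuplex (P : Finset (ℤ × ℤ)) : Prop :=
  IsColumnDuplex P ∧ ∀ x : ℤ, comps (colP P x) = 2 →
    comps (colP P (x + 1)) ≤ 1 ∧ comps (colP P (x - 1)) ≤ 1

noncomputable def xmax (P : Finset (ℤ × ℤ)) : ℤ := fmax (P.image Prod.fst)

noncomputable def upBot (s : Finset ℤ) : ℤ := fmax (s.filter (fun y => y - 1 ∉ s))
noncomputable def lowTop (s : Finset ℤ) : ℤ := fmax (s.filter (fun y => y < upBot s))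
noncomputable def lowerComp (s : Finset ℤ) : Finset ℤ := s.filter (fun y => y ≤ lowTop s)
noncomputable def upperComp (s : Finset ℤ) : Finset ℤ := s.filter (fun y => upBot s ≤ y)
noncomputable def holeOf (s : Finset ℤ) : Finset ℤ := Finset.Ioo (lowTop s) (upBot s)
def sharesEdge (a b : Finset ℤ) : Prop := (a ∩ b).Nonempty

/-- The decomposition map: remove the (duplex) last column of `P`, and record
the y-coordinates of the cell of the second-last column right-adjacent to the
top of the lower component and of the cell right-adjacent to the bottom of the
upper component, together with the heights of the two components. -/
noncomputable def lastColSplit (P : Finset (ℤ × ℤ)) :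
    Finset (ℤ × ℤ) × (ℤ × ℤ) × (ℤ × ℤ) :=
  let s := colP P (xmax P)
  (P.filter (fun p => p.1 ≠ xmax P), (lowTop s, upBot s),
    (lowTop s - fmin s + 1, fmax s - upBot s + 1))

/-!
Deleting the last column `m` of a polyomino keeps it connected when column `m - 1` is a single
run, since every path through column `m` can be pushed onto that run. If the last column is
duplex, each of its two runs is a maximal vertical run of the last column, so by connectedness it
touches column `m - 1`; that column is then simplex, hence an interval, and so contains the top
of the lower run and the bottom of the upper run. The last column is recovered from these two
cells and the two run heights, and conversely any such data glue two vertical bars onto an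
element of `S` to give a simplex-duplex polyomino ending in a duplex column.
-/

open Finset Relation

section Extrema

variable {s : Finset ℤ} {y : ℤ}

lemma le_fmax (hy : y ∈ s) : y ≤ fmax s := le_csSup s.bddAbove hy

lemma fmin_le (hy : y ∈ s) : fmin s ≤ y := csInf_le s.bddBelow hy

lemma fmax_mem (h : s.Nonempty) : fmax s ∈ s := h.csSup_mem

lemma fmin_mem (h : s.Nonempty) : fmin s ∈ s := h.csInf_mem

lemma fmax_eq (hy : y ∈ s) (h : ∀ z ∈ s, z ≤ y) : fmax s = y :=
  IsGreatest.csSup_eq ⟨hy, h⟩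

lemma fmin_eq (hy : y ∈ s) (h : ∀ z ∈ s, y ≤ z) : fmin s = y :=
  IsLeast.csInf_eq ⟨hy, h⟩

end Extrema

section Runs

def runStarts (s : Finset ℤ) : Finset ℤ := s.filter (fun y => y - 1 ∉ s)

variable {s : Finset ℤ} {a b c d y z : ℤ}

lemma mem_runStarts : y ∈ runStarts s ↔ y ∈ s ∧ y - 1 ∉ s := mem_filter

lemma comps_eq_card_runStarts : comps s = #(runStarts s) := rfl

lemma upBot_eq_fmax_runStarts : upBot s = fmax (runStarts s) := rfl

lemma comps_empty : comps ∅ = 0 := rfl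

lemma fmin_mem_runStarts (h : s.Nonempty) : fmin s ∈ runStarts s :=
  mem_runStarts.2 ⟨fmin_mem h, fun h' => by have := fmin_le h'; omega⟩

lemma comps_pos (h : s.Nonempty) : 0 < comps s :=
  card_pos.2 ⟨fmin s, fmin_mem_runStarts h⟩

lemma nonempty_of_comps_pos (h : 0 < comps s) : s.Nonempty :=
  (card_pos.1 h).mono (filter_subset _ _)

lemma exists_mem_runStarts_of_notMem (hy : y ∉ s) (hz : z ∈ s) (hyz : y < z) :
    ∃ w ∈ runStarts s, y < w ∧ w ≤ z := by
  set t := s.filter (fun w => y < w)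
  have hzt : z ∈ t := mem_filter.2 ⟨hz, hyz⟩
  obtain ⟨hws, hyw⟩ : fmin t ∈ s ∧ y < fmin t := mem_filter.1 (fmin_mem ⟨z, hzt⟩)
  refine ⟨fmin t, mem_runStarts.2 ⟨hws, fun hw => ?_⟩, hyw, fmin_le hzt⟩
  have hy' : y < fmin t - 1 := lt_of_le_of_ne (by omega) fun h => hy (h ▸ hw)
  have : fmin t ≤ fmin t - 1 := fmin_le (mem_filter.2 ⟨hw, hy'⟩)
  omega

lemma mem_of_forall_runStarts (hz : z ∈ s) (hyz : y ≤ z)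
    (h : ∀ w ∈ runStarts s, y < w → z < w) : y ∈ s := by
  by_contra hy
  obtain ⟨w, hw, hyw, hwz⟩ :=
    exists_mem_runStarts_of_notMem hy hz (lt_of_le_of_ne hyz fun h => hy (h ▸ hz))
  exact absurd (h w hw hyw) (not_lt.2 hwz)

lemma eq_Icc_of_comps_eq_one (h : comps s = 1) : s = Icc (fmin s) (fmax s) := by
  have hne : s.Nonempty := nonempty_of_comps_pos (by omega)
  have hstarts : {fmin s} = runStarts s :=
    eq_of_subset_of_card_le (singleton_subset_iff.2 (fmin_mem_runStarts hne))
      (by rw [← comps_eq_card_runStarts, h, card_singleton])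
  ext y
  refine ⟨fun hy => mem_Icc.2 ⟨fmin_le hy, le_fmax hy⟩, fun hy => ?_⟩
  refine mem_of_forall_runStarts (fmax_mem hne) (mem_Icc.1 hy).2 fun w hw hyw => ?_
  rw [← hstarts, mem_singleton] at hw
  have := (mem_Icc.1 hy).1
  omega

lemma eq_Icc_union_Icc_of_comps_eq_two (h : comps s = 2) :
    fmin s ≤ lowTop s ∧ lowTop s + 2 ≤ upBot s ∧ upBot s ≤ fmax s ∧
      s = Icc (fmin s) (lowTop s) ∪ Icc (upBot s) (fmax s) := by
  have hstne : (runStarts s).Nonempty := card_pos.1 (by rw [← comps_eq_card_runStarts]; omega)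
  have hu : upBot s ∈ runStarts s := fmax_mem hstne
  obtain ⟨hus, hu1⟩ := mem_runStarts.1 hu
  have hne : s.Nonempty := ⟨_, hus⟩
  have hf := fmin_mem_runStarts hne
  have hfu : fmin s < upBot s := by
    refine lt_of_le_of_ne (fmin_le hus) fun hfu => ?_
    have : runStarts s ⊆ {fmin s} := fun w hw =>
      mem_singleton.2 (le_antisymm (hfu ▸ le_fmax hw) (fmin_le (mem_runStarts.1 hw).1))
    have := card_le_card this
    rw [← comps_eq_card_runStarts, card_singleton] at this
    omega
  have hstarts : {fmin s, upBot s} = runStarts s := by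
    refine eq_of_subset_of_card_le (insert_subset hf (singleton_subset_iff.2 hu)) ?_
    rw [← comps_eq_card_runStarts, card_pair hfu.ne, h]
  have hbelow : fmin s ∈ s.filter (fun y => y < upBot s) := mem_filter.2 ⟨fmin_mem hne, hfu⟩
  obtain ⟨hls, hlu⟩ : lowTop s ∈ s ∧ lowTop s < upBot s := mem_filter.1 (fmax_mem ⟨_, hbelow⟩)
  have hfl : fmin s ≤ lowTop s := le_fmax hbelow
  have hl2 : lowTop s + 2 ≤ upBot s := by
    by_contra h'
    exact hu1 (show upBot s - 1 = lowTop s by omega ▸ hls)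
  refine ⟨hfl, hl2, le_fmax hus, ?_⟩
  ext y
  simp only [mem_union, mem_Icc]
  constructor
  · intro hy
    rcases lt_or_ge y (upBot s) with hyu | hyu
    · exact Or.inl ⟨fmin_le hy, le_fmax (mem_filter.2 ⟨hy, hyu⟩)⟩
    · exact Or.inr ⟨hyu, le_fmax hy⟩
  · rintro (⟨hfy, hyl⟩ | ⟨huy, hyd⟩)
    · refine mem_of_forall_runStarts hls hyl fun w hw hyw => ?_
      rw [← hstarts, mem_insert, mem_singleton] at hw
      omega
    · refine mem_of_forall_runStarts (fmax_mem hne) hyd fun w hw hyw => ?_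
      rw [← hstarts, mem_insert, mem_singleton] at hw
      omega

section TwoRuns

variable (hab : a ≤ b) (hbc : b + 2 ≤ c) (hcd : c ≤ d)
include hab hbc hcd

lemma runStarts_Icc_union_Icc : runStarts (Icc a b ∪ Icc c d) = {a, c} := by
  ext y
  simp only [mem_runStarts, mem_union, mem_Icc, mem_insert, mem_singleton]
  omega

lemma comps_Icc_union_Icc : comps (Icc a b ∪ Icc c d) = 2 := by
  rw [comps_eq_card_runStarts, runStarts_Icc_union_Icc hab hbc hcd, card_pair (by omega)]

lemma upBot_Icc_union_Icc : upBot (Icc a b ∪ Icc c d) = c := by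
  rw [upBot_eq_fmax_runStarts, runStarts_Icc_union_Icc hab hbc hcd]
  exact fmax_eq (by simp) (by simp only [mem_insert, mem_singleton]; omega)

lemma lowTop_Icc_union_Icc : lowTop (Icc a b ∪ Icc c d) = b := by
  rw [lowTop, upBot_Icc_union_Icc hab hbc hcd]
  exact fmax_eq (by simp only [mem_filter, mem_union, mem_Icc]; omega)
    (by simp only [mem_filter, mem_union, mem_Icc]; omega)

end TwoRuns

lemma fmin_Icc_union_Icc (hab : a ≤ b) (hac : a ≤ c) : fmin (Icc a b ∪ Icc c d) = a :=
  fmin_eq (by simp only [mem_union, mem_Icc]; omega) (by simp only [mem_union, mem_Icc]; omega)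

lemma fmax_Icc_union_Icc (hbd : b ≤ d) (hcd : c ≤ d) : fmax (Icc a b ∪ Icc c d) = d :=
  fmax_eq (by simp only [mem_union, mem_Icc]; omega) (by simp only [mem_union, mem_Icc]; omega)

end Runs

section Columns

variable {P Q : Finset (ℤ × ℤ)} {s : Finset ℤ} {m x y : ℤ} {p : ℤ × ℤ}

lemma mem_colP : y ∈ colP P x ↔ (x, y) ∈ P := by
  simp [colP]

lemma colP_filter_ne_self : colP (P.filter (fun p => p.1 ≠ m)) m = ∅ := by
  ext y; simp [mem_colP]

lemma colP_filter_ne_of_ne (hx : x ≠ m) : colP (P.filter (fun p => p.1 ≠ m)) x = colP P x := by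
  ext y; simp [mem_colP, hx]

lemma colP_union_image_self (h : ∀ p ∈ Q, p.1 ≠ m) :
    colP (Q ∪ s.image (fun y => (m, y))) m = s := by
  ext y; simpa [mem_colP] using fun hy => absurd rfl (h (m, y) hy)

lemma colP_union_image_of_ne (hx : x ≠ m) : colP (Q ∪ s.image (fun y => (m, y))) x = colP Q x := by
  ext y; simp [mem_colP, Ne.symm hx]

lemma filter_ne_union_image_colP :
    P.filter (fun p => p.1 ≠ m) ∪ (colP P m).image (fun y => (m, y)) = P := by
  ext ⟨x, y⟩; by_cases hx : x = m <;> simp [mem_colP, hx, Ne.symm]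

lemma filter_ne_union_image (h : ∀ p ∈ Q, p.1 ≠ m) :
    (Q ∪ s.image (fun y => (m, y))).filter (fun p => p.1 ≠ m) = Q := by
  ext ⟨x, y⟩
  by_cases hx : x = m
  · subst hx; simpa using fun hy => h (x, y) hy rfl
  · simp [hx, Ne.symm]

lemma le_xmax (hp : p ∈ P) : p.1 ≤ xmax P := le_fmax (mem_image_of_mem Prod.fst hp)

lemma xmax_eq (hy : (m, y) ∈ P) (h : ∀ p ∈ P, p.1 ≤ m) : xmax P = m :=
  fmax_eq (mem_image_of_mem Prod.fst hy) (by simpa using h)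

lemma colP_xmax_nonempty (h : P.Nonempty) : (colP P (xmax P)).Nonempty := by
  obtain ⟨p, hp, hpx⟩ := mem_image.1 (fmax_mem (h.image Prod.fst))
  exact ⟨p.2, mem_colP.2 (by rwa [xmax, ← hpx])⟩

lemma colP_eq_empty_of_xmax_lt (hx : xmax P < x) : colP P x = ∅ :=
  eq_empty_iff_forall_notMem.2 fun _ hy => absurd (le_xmax (mem_colP.1 hy)) (by simpa using hx)

end Columns

lemma Relation.ReflTransGen.exists_boundary_edge {α : Type*} {r : α → α → Prop} {A : α → Prop}
    {a b : α} (h : ReflTransGen r a b) (ha : A a) (hb : ¬A b) : ∃ u v, r u v ∧ A u ∧ ¬A v := by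
  induction h with
  | refl => exact absurd ha hb
  | @tail c d _ hcd ih =>
    by_cases hc : A c
    · exact ⟨c, d, hcd, hc, hb⟩
    · exact ih hc

section Connectivity

def adjIn (P : Finset (ℤ × ℤ)) (u v : ℤ × ℤ) : Prop := u ∈ P ∧ v ∈ P ∧ cellAdj u v

variable {P Q : Finset (ℤ × ℤ)} {a b c u v : ℤ × ℤ} {m x y₁ y₂ d₁ d₂ : ℤ}

lemma cellAdj_comm : cellAdj u v ↔ cellAdj v u := by
  unfold cellAdj; omega

instance : Std.Symm (adjIn P) := ⟨fun _ _ ⟨hu, hv, h⟩ => ⟨hv, hu, cellAdj_comm.1 h⟩⟩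

lemma adjIn_mono (h : P ⊆ Q) : adjIn P ≤ adjIn Q := fun _ _ ⟨hu, hv, huv⟩ => ⟨h hu, h hv, huv⟩

lemma IsPolyomino.reflTransGen (hP : IsPolyomino P) (ha : a ∈ P) (hb : b ∈ P) :
    ReflTransGen (adjIn P) a b :=
  hP.2 a ha b hb

lemma isPolyomino_of_forall_reflTransGen (hc : c ∈ P) (h : ∀ a ∈ P, ReflTransGen (adjIn P) a c) :
    IsPolyomino P :=
  ⟨⟨c, hc⟩, fun a ha b hb => (h a ha).trans (symm (h b hb))⟩

lemma reflTransGen_adjIn_vertical (h : ∀ y ∈ Icc d₁ d₂, (x, y) ∈ P)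
    (hy₁ : y₁ ∈ Icc d₁ d₂) (hy₂ : y₂ ∈ Icc d₁ d₂) :
    ReflTransGen (adjIn P) (x, y₁) (x, y₂) := by
  have from_bottom : ∀ y, d₁ ≤ y → y ≤ d₂ → ReflTransGen (adjIn P) (x, d₁) (x, y) := by
    intro y hy
    induction y, hy using Int.leInduction with
    | base => exact fun _ => .refl
    | succ y hy ih =>
      intro hy'
      refine (ih (by omega)).tail
        ⟨h y (mem_Icc.2 ⟨hy, by omega⟩), h (y + 1) (mem_Icc.2 ⟨by omega, hy'⟩), ?_⟩
      exact Or.inl ⟨rfl, Or.inr rfl⟩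
  rw [mem_Icc] at hy₁ hy₂
  exact (symm (from_bottom y₁ hy₁.1 hy₁.2)).trans (from_bottom y₂ hy₂.1 hy₂.2)

lemma isPolyomino_image_Icc (hd : d₁ ≤ d₂) : IsPolyomino ((Icc d₁ d₂).image (fun y => (x, y))) := by
  have hmem : ∀ y ∈ Icc d₁ d₂, (x, y) ∈ (Icc d₁ d₂).image (fun y => (x, y)) :=
    fun y hy => mem_image_of_mem _ hy
  refine isPolyomino_of_forall_reflTransGen (hmem d₁ (by simpa)) fun a ha => ?_
  obtain ⟨y, hy, rfl⟩ := mem_image.1 ha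
  exact reflTransGen_adjIn_vertical hmem hy (by simpa)

lemma IsPolyomino.union (hP : IsPolyomino P) (hQ : IsPolyomino Q) (hu : u ∈ P) (hv : v ∈ Q)
    (huv : cellAdj u v) : IsPolyomino (P ∪ Q) := by
  refine isPolyomino_of_forall_reflTransGen (mem_union_left Q hu) fun a ha => ?_
  rcases mem_union.1 ha with ha | ha
  · exact ReflTransGen.mono (adjIn_mono subset_union_left) _ _ (hP.reflTransGen ha hu)
  · exact (ReflTransGen.mono (adjIn_mono subset_union_right) _ _ (hQ.reflTransGen ha hv)).tail
      ⟨mem_union_right P hv, mem_union_left Q hu, cellAdj_comm.1 huv⟩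

lemma IsPolyomino.filter_ne_of_comps_eq_one (hP : IsPolyomino P) (hm : ∀ p ∈ P, p.1 ≤ m)
    (h1 : comps (colP P (m - 1)) = 1) : IsPolyomino (P.filter (fun p => p.1 ≠ m)) := by
  set Q := P.filter (fun p => p.1 ≠ m)
  set t := colP P (m - 1)
  have ht := eq_Icc_of_comps_eq_one h1
  have hrun : ∀ y ∈ Icc (fmin t) (fmax t), (m - 1, y) ∈ Q := fun y hy =>
    mem_filter.2 ⟨mem_colP.1 (show y ∈ t by rwa [ht]), by omega⟩
  have hbot : fmin t ∈ Icc (fmin t) (fmax t) := by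
    rw [← ht]; exact fmin_mem (nonempty_of_comps_pos (by omega))
  have cross : ∀ u v, adjIn P u v → u.1 = m → v.1 ≠ m →
      ReflTransGen (adjIn Q) (m - 1, fmin t) v := by
    rintro ⟨ux, uy⟩ ⟨vx, vy⟩ ⟨-, hv, huv⟩ (rfl : ux = m) hvm
    have := hm _ hv
    unfold cellAdj at huv
    obtain ⟨rfl, rfl⟩ : vx = ux - 1 ∧ vy = uy := by omega
    exact reflTransGen_adjIn_vertical hrun hbot (by rw [← ht]; exact mem_colP.2 hv)
  let f : ℤ × ℤ → ℤ × ℤ := fun p => if p.1 = m then (m - 1, fmin t) else p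
  have step : adjIn P ≤ Function.onFun (ReflTransGen (adjIn Q)) f := by
    intro u v huv
    by_cases hu : u.1 = m <;> by_cases hv : v.1 = m <;> simp only [Function.onFun, f, hu, hv,
      if_true, if_false]
    · rfl
    · exact cross u v huv hu hv
    · exact symm (cross v u (symm huv) hv hu)
    · exact .single ⟨mem_filter.2 ⟨huv.1, hu⟩, mem_filter.2 ⟨huv.2.1, hv⟩, huv.2.2⟩
  refine isPolyomino_of_forall_reflTransGen (hrun _ hbot) fun a ha => ?_
  obtain ⟨haP, ham⟩ := mem_filter.1 ha
  have := ReflTransGen.lift' f step _ _ (hP.reflTransGen haP (mem_filter.1 (hrun _ hbot)).1)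
  simpa [Function.onFun, f, ham] using this

lemma IsPolyomino.exists_mem_colP_sub_one_of_run (hP : IsPolyomino P) (hm : ∀ p ∈ P, p.1 ≤ m)
    (hd : d₁ ≤ d₂) (hrun : ∀ y ∈ Icc d₁ d₂, (m, y) ∈ P) (hbelow : (m, d₁ - 1) ∉ P)
    (habove : (m, d₂ + 1) ∉ P) (hc : c ∈ P) (hcrun : ¬(c.1 = m ∧ c.2 ∈ Icc d₁ d₂)) :
    ∃ y ∈ Icc d₁ d₂, (m - 1, y) ∈ P := by
  obtain ⟨⟨ux, uy⟩, ⟨vx, vy⟩, ⟨-, hv, huv⟩, ⟨hux, hu⟩, hvrun⟩ :=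
    (hP.reflTransGen (hrun d₁ (by simpa)) hc).exists_boundary_edge
      (A := fun p => p.1 = m ∧ p.2 ∈ Icc d₁ d₂) ⟨rfl, by simpa⟩ hcrun
  have hvm := hm _ hv
  have hvbelow : ¬(vx = m ∧ vy = d₁ - 1) := fun ⟨h₁, h₂⟩ => hbelow (h₁ ▸ h₂ ▸ hv)
  have hvabove : ¬(vx = m ∧ vy = d₂ + 1) := fun ⟨h₁, h₂⟩ => habove (h₁ ▸ h₂ ▸ hv)
  simp only [mem_Icc] at hu hvrun hux hvm
  unfold cellAdj at huv
  obtain ⟨rfl, rfl⟩ : vx = m - 1 ∧ vy = uy := by omega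
  exact ⟨vy, mem_Icc.2 hu, hv⟩

end Connectivity

section SimplexDuplex

variable {P Q : Finset (ℤ × ℤ)} {s : Finset ℤ} {a b c d : ℤ}

lemma IsSimplexDuplex.of_comps_le (hQ : IsPolyomino Q) (hP : IsSimplexDuplex P)
    (h : ∀ x, comps (colP Q x) ≤ comps (colP P x)) : IsSimplexDuplex Q := by
  refine ⟨⟨hQ, fun x => (h x).trans (hP.1.2 x)⟩, fun x hx => ?_⟩
  have := hP.2 x (le_antisymm (hP.1.2 x) (hx ▸ h x))
  exact ⟨(h _).trans this.1, (h _).trans this.2⟩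

lemma comps_colP_xmax_eq_one_or_two (hP : IsSimplexDuplex P) :
    comps (colP P (xmax P)) = 1 ∨ comps (colP P (xmax P)) = 2 := by
  have := comps_pos (colP_xmax_nonempty hP.1.1.1)
  have := hP.1.2 (xmax P)
  omega

lemma IsSimplexDuplex.lowTop_upBot_mem_colP_sub_one (hP : IsSimplexDuplex P)
    (h2 : comps (colP P (xmax P)) = 2) :
    comps (colP P (xmax P - 1)) = 1 ∧ lowTop (colP P (xmax P)) ∈ colP P (xmax P - 1) ∧
      upBot (colP P (xmax P)) ∈ colP P (xmax P - 1) := by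
  set s := colP P (xmax P)
  obtain ⟨hfl, hlu, hud, hs⟩ := eq_Icc_union_Icc_of_comps_eq_two h2
  have hmem : ∀ y, (xmax P, y) ∈ P ↔
      y ∈ Icc (fmin s) (lowTop s) ∨ y ∈ Icc (upBot s) (fmax s) := fun y => by
    rw [← mem_colP, ← mem_union, ← hs]
  simp only [mem_Icc] at hmem
  have hm : ∀ p ∈ P, p.1 ≤ xmax P := fun _ => le_xmax
  obtain ⟨y₁, hy₁, hy₁P⟩ := hP.1.1.exists_mem_colP_sub_one_of_run hm hfl
    (fun y hy => (hmem y).2 (by simp only [mem_Icc] at hy; omega))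
    (fun h => by have := (hmem _).1 h; omega) (fun h => by have := (hmem _).1 h; omega)
    ((hmem (upBot s)).2 (by omega)) (by simp only [mem_Icc]; omega)
  obtain ⟨y₂, hy₂, hy₂P⟩ := hP.1.1.exists_mem_colP_sub_one_of_run hm hud
    (fun y hy => (hmem y).2 (by simp only [mem_Icc] at hy; omega))
    (fun h => by have := (hmem _).1 h; omega) (fun h => by have := (hmem _).1 h; omega)
    ((hmem (lowTop s)).2 (by omega)) (by simp only [mem_Icc]; omega)
  have h1 : comps (colP P (xmax P - 1)) = 1 :=
    le_antisymm (hP.2 _ h2).2 (comps_pos ⟨y₁, mem_colP.2 hy₁P⟩)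
  have := fmin_le (mem_colP.2 hy₁P)
  have := le_fmax (mem_colP.2 hy₂P)
  simp only [mem_Icc] at hy₁ hy₂
  refine ⟨h1, ?_, ?_⟩ <;> rw [eq_Icc_of_comps_eq_one h1, mem_Icc] <;> omega

lemma IsSimplexDuplex.filter_ne_xmax (hP : IsSimplexDuplex P) (h2 : comps (colP P (xmax P)) = 2) :
    IsSimplexDuplex (P.filter (fun p => p.1 ≠ xmax P)) ∧
      xmax (P.filter (fun p => p.1 ≠ xmax P)) = xmax P - 1 := by
  obtain ⟨h1, hl, -⟩ := hP.lowTop_upBot_mem_colP_sub_one h2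
  have hm : ∀ p ∈ P, p.1 ≤ xmax P := fun _ => le_xmax
  refine ⟨.of_comps_le (hP.1.1.filter_ne_of_comps_eq_one hm h1) hP fun x => ?_, ?_⟩
  · by_cases hx : x = xmax P
    · rw [hx, colP_filter_ne_self, comps_empty]
      exact Nat.zero_le _
    · rw [colP_filter_ne_of_ne hx]
  · refine xmax_eq (mem_filter.2 ⟨mem_colP.1 hl, by omega⟩) fun p hp => ?_
    obtain ⟨hp, hpx⟩ := mem_filter.1 hp
    have := le_xmax hp
    omega

lemma IsSimplexDuplex.union_image (hQ : IsSimplexDuplex Q) (h1 : comps (colP Q (xmax Q)) = 1)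
    (hP : IsPolyomino (Q ∪ s.image (fun y => (xmax Q + 1, y)))) (h2 : comps s = 2) :
    IsSimplexDuplex (Q ∪ s.image (fun y => (xmax Q + 1, y))) := by
  have hQm : ∀ p ∈ Q, p.1 ≠ xmax Q + 1 := fun p hp => by have := le_xmax hp; omega
  have hlast : colP (Q ∪ s.image (fun y => (xmax Q + 1, y))) (xmax Q + 1) = s :=
    colP_union_image_self hQm
  have hold : ∀ x ≠ xmax Q + 1, colP (Q ∪ s.image (fun y => (xmax Q + 1, y))) x = colP Q x :=
    fun x hx => colP_union_image_of_ne hx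
  refine ⟨⟨hP, fun x => ?_⟩, fun x hx => ?_⟩
  · by_cases hx : x = xmax Q + 1
    · rw [hx, hlast, h2]
    · rw [hold x hx]; exact hQ.1.2 x
  · by_cases hxm : x = xmax Q + 1
    · subst hxm
      rw [hold _ (by omega), hold _ (by omega), colP_eq_empty_of_xmax_lt (by omega), comps_empty,
        add_sub_cancel_right, h1]
      omega
    · rw [hold x hxm] at hx
      have hxQ : x < xmax Q := by
        rcases lt_trichotomy x (xmax Q) with h | rfl | h
        · exact h
        · omega
        · rw [colP_eq_empty_of_xmax_lt h, comps_empty] at hx; omega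
      rw [hold _ (by omega), hold _ (by omega)]
      exact hQ.2 x hx

lemma IsSimplexDuplex.union_image_Icc_union_Icc (hQ : IsSimplexDuplex Q)
    (h1 : comps (colP Q (xmax Q)) = 1) (hab : a ≤ b) (hbc : b + 2 ≤ c) (hcd : c ≤ d)
    (hb : b ∈ colP Q (xmax Q)) (hc : c ∈ colP Q (xmax Q)) :
    IsSimplexDuplex (Q ∪ (Icc a b ∪ Icc c d).image (fun y => (xmax Q + 1, y))) := by
  refine hQ.union_image h1 ?_ (comps_Icc_union_Icc hab hbc hcd)
  rw [image_union, ← union_assoc]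
  have hadj : ∀ y, cellAdj (xmax Q, y) (xmax Q + 1, y) := fun _ => Or.inr ⟨rfl, Or.inr rfl⟩
  exact (hQ.1.1.union (isPolyomino_image_Icc hab) (mem_colP.1 hb)
    (mem_image_of_mem _ (right_mem_Icc.2 hab)) (hadj b)).union
    (isPolyomino_image_Icc hcd) (mem_union_left _ (mem_colP.1 hc))
    (mem_image_of_mem _ (left_mem_Icc.2 hcd)) (hadj c)

end SimplexDuplex

section Decomposition

def duplexEnded (n : ℕ) : Set (Finset (ℤ × ℤ)) :=
  {P | IsSimplexDuplex P ∧ comps (colP P (xmax P)) = 2 ∧ (colP P (xmax P - 1)).card = n}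

def attachmentData (n : ℕ) : Set (Finset (ℤ × ℤ) × (ℤ × ℤ) × (ℤ × ℤ)) :=
  {T | IsSimplexDuplex T.1 ∧ comps (colP T.1 (xmax T.1)) = 1 ∧
    (colP T.1 (xmax T.1)).card = n ∧
    T.2.1.1 ∈ colP T.1 (xmax T.1) ∧ T.2.1.2 ∈ colP T.1 (xmax T.1) ∧
    T.2.1.1 + 2 ≤ T.2.1.2 ∧ 1 ≤ T.2.2.1 ∧ 1 ≤ T.2.2.2}

lemma mapsTo_lastColSplit (n : ℕ) : Set.MapsTo lastColSplit (duplexEnded n) (attachmentData n) := by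
  rintro P ⟨hP, h2, hn⟩
  obtain ⟨hQ, hxQ⟩ := hP.filter_ne_xmax h2
  obtain ⟨h1, hl, hu⟩ := hP.lowTop_upBot_mem_colP_sub_one h2
  obtain ⟨hfl, hlu, hud, -⟩ := eq_Icc_union_Icc_of_comps_eq_two h2
  have hcol : colP (P.filter (fun p => p.1 ≠ xmax P)) (xmax (P.filter (fun p => p.1 ≠ xmax P))) =
      colP P (xmax P - 1) := by
    rw [hxQ, colP_filter_ne_of_ne (by omega)]
  rw [← hcol] at h1 hn hl hu
  refine ⟨hQ, h1, hn, hl, hu, hlu, ?_, ?_⟩ <;> dsimp only [lastColSplit] <;> omega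

lemma injOn_lastColSplit :
    Set.InjOn lastColSplit {P | IsSimplexDuplex P ∧ comps (colP P (xmax P)) = 2} := by
  rintro P₁ ⟨hP₁, h₁⟩ P₂ ⟨hP₂, h₂⟩ heq
  simp only [lastColSplit, Prod.mk.injEq] at heq
  obtain ⟨hQ, ⟨hl, hu⟩, hmin, hmax⟩ := heq
  have hx : xmax P₁ = xmax P₂ := by
    have e₁ := (hP₁.filter_ne_xmax h₁).2
    have e₂ := (hP₂.filter_ne_xmax h₂).2
    rw [hQ] at e₁
    omega
  have hcol : colP P₁ (xmax P₁) = colP P₂ (xmax P₂) := by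
    rw [(eq_Icc_union_Icc_of_comps_eq_two h₁).2.2.2, (eq_Icc_union_Icc_of_comps_eq_two h₂).2.2.2,
      hl, hu,
      show fmin (colP P₁ (xmax P₁)) = fmin (colP P₂ (xmax P₂)) by omega,
      show fmax (colP P₁ (xmax P₁)) = fmax (colP P₂ (xmax P₂)) by omega]
  rw [← filter_ne_union_image_colP (P := P₁) (m := xmax P₁),
    ← filter_ne_union_image_colP (P := P₂) (m := xmax P₂), hQ, hcol, hx]

lemma surjOn_lastColSplit (n : ℕ) : Set.SurjOn lastColSplit (duplexEnded n) (attachmentData n) := by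
  rintro ⟨Q, ⟨b, c⟩, ⟨h₁, h₂⟩⟩ ⟨hQ, h1, hn, hb, hc, hbc, hh₁, hh₂⟩
  dsimp only at hQ h1 hn hb hc hbc hh₁ hh₂
  have hab : b - h₁ + 1 ≤ b := by omega
  have hcd : c ≤ c + h₂ - 1 := by omega
  have hQm : ∀ p ∈ Q, p.1 ≠ xmax Q + 1 := fun p hp => by have := le_xmax hp; omega
  set s := Icc (b - h₁ + 1) b ∪ Icc c (c + h₂ - 1)
  have hlast : colP (Q ∪ s.image (fun y => (xmax Q + 1, y))) (xmax Q + 1) = s :=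
    colP_union_image_self hQm
  have hxP : xmax (Q ∪ s.image (fun y => (xmax Q + 1, y))) = xmax Q + 1 := by
    have hb' : b ∈ s := by simp only [s, mem_union, mem_Icc]; omega
    refine xmax_eq (mem_union_right _ (mem_image_of_mem _ hb')) fun p hp => ?_
    rcases mem_union.1 hp with hp | hp
    · have := le_xmax hp; omega
    · obtain ⟨y, -, rfl⟩ := mem_image.1 hp; rfl
  refine ⟨Q ∪ s.image (fun y => (xmax Q + 1, y)),
    ⟨hQ.union_image_Icc_union_Icc h1 hab (by omega) hcd hb hc, ?_, ?_⟩, ?_⟩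
  · rw [hxP, hlast]
    exact comps_Icc_union_Icc hab (by omega) hcd
  · rw [hxP, add_sub_cancel_right, colP_union_image_of_ne (by omega)]
    exact hn
  · dsimp only [lastColSplit]
    rw [hxP, filter_ne_union_image hQm, hlast, lowTop_Icc_union_Icc hab (by omega) hcd,
      upBot_Icc_union_Icc hab (by omega) hcd, fmin_Icc_union_Icc hab (by omega),
      fmax_Icc_union_Icc (by omega) hcd]
    simp only [Prod.mk.injEq, true_and]
    omega

end Decomposition

/-- Every simplex-duplex polyomino either ends with a simplex column, or its
rightmost column is duplex and the column immediately to its left is simplex;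
and for each `n`, removing the rightmost (duplex) column and recording the two
attachment positions and the two component heights is a bijection between
simplex-duplex polyominoes ending in a duplex column whose second-last column
has `n` cells, and triples of: an element of `S` (simplex-duplex polyominoes
ending in a simplex column) with last column of `n` cells, a choice of two
non-adjacent cells in that last column, and an ordered pair of positive
integers (the component heights). -/
theorem simplex_duplex_last_column_decomposition :
    (∀ P : Finset (ℤ × ℤ), IsSimplexDuplex P →
      comps (colP P (xmax P)) = 1 ∨
        (comps (colP P (xmax P)) = 2 ∧ comps (colP P (xmax P - 1)) = 1)) ∧
    ∀ n : ℕ, Set.BijOn lastColSplit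
      {P : Finset (ℤ × ℤ) | IsSimplexDuplex P ∧ comps (colP P (xmax P)) = 2 ∧
        (colP P (xmax P - 1)).card = n}
      {T : Finset (ℤ × ℤ) × (ℤ × ℤ) × (ℤ × ℤ) |
        IsSimplexDuplex T.1 ∧ comps (colP T.1 (xmax T.1)) = 1 ∧
        (colP T.1 (xmax T.1)).card = n ∧
        T.2.1.1 ∈ colP T.1 (xmax T.1) ∧ T.2.1.2 ∈ colP T.1 (xmax T.1) ∧
        T.2.1.1 + 2 ≤ T.2.1.2 ∧ 1 ≤ T.2.2.1 ∧ 1 ≤ T.2.2.2} := by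
  refine ⟨fun P hP => ?_, fun n => ⟨mapsTo_lastColSplit n, ?_, surjOn_lastColSplit n⟩⟩
  · rcases comps_colP_xmax_eq_one_or_two hP with h | h
    · exact Or.inl h
    · exact Or.inr ⟨h, (hP.lowTop_upBot_mem_colP_sub_one h).1⟩
  · exact injOn_lastColSplit.mono fun _ hP => And.intro hP.1 hP.2.1
end
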